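/- Let H be a metric space with metric d, let h = (h_1, …, h_r) ∈ H^r, and for a partition Q of {1,…,r} into atoms let d^Q(h) denote the maximal diameter of an atom of Q and d_Q(h) the minimum distance between two distinct atoms of Q, both with respect to the metric on indices induced by h_1, …, h_r; let α ≤ β. If h ∈ H^r satisfies d^Q(h) ≤ α and d_Q(h) ≤ β, then there is a partition Q_1 strictly coarser than Q with d^{Q_1}(h) ≤ 3β. -/
import Mathlib


/-- Coarsening lemma: if `Q` is a partition of `{1,…,r}` whose atoms have diameter
(with respect to the points `h₁,…,h_r`) at most `α`, and two distinct atoms lie at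
distance at most `β` (with `0 ≤ α ≤ β`), then there is a strictly coarser partition
`Q₁` all of whose atoms have diameter at most `3β`. -/
theorem stmt_16 {H : Type*} [MetricSpace H] (r : ℕ) (h : Fin r → H)
    (Q : Set (Set (Fin r))) (hQ : Setoid.IsPartition Q)
    (α β : ℝ) (h0 : 0 ≤ α) (hαβ : α ≤ β)
    (hdiam : ∀ I ∈ Q, ∀ i ∈ I, ∀ j ∈ I, dist (h i) (h j) ≤ α)
    (hclose : ∃ I ∈ Q, ∃ J ∈ Q, I ≠ J ∧ ∃ i ∈ I, ∃ j ∈ J, dist (h i) (h j) ≤ β) :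
    ∃ Q₁ : Set (Set (Fin r)), Setoid.IsPartition Q₁ ∧
      (∀ I ∈ Q, ∃ J ∈ Q₁, I ⊆ J) ∧ Q₁ ≠ Q ∧
      ∀ J ∈ Q₁, ∀ i ∈ J, ∀ j ∈ J, dist (h i) (h j) ≤ 3 * β := by
  obtain ⟨I, hI, J, hJ, hIJ, i, hi, j, hj, hd⟩ := hclose
  have hβ0 : 0 ≤ β := le_trans h0 hαβ
  -- atoms containing a common point are equal
  have key : ∀ A ∈ Q, ∀ B ∈ Q, ∀ a : Fin r, a ∈ A → a ∈ B → A = B := by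
    intro A hA B hB a haA haB
    obtain ⟨C, _, hCuniq⟩ := hQ.2 a
    rw [hCuniq A ⟨hA, haA⟩, hCuniq B ⟨hB, haB⟩]
  set Q₁ : Set (Set (Fin r)) := insert (I ∪ J) (Q \ {I, J}) with hQ₁def
  have hIJnotQ : (I ∪ J) ∉ Q := by
    intro hmem
    have h1 : I ∪ J = J := key _ hmem _ hJ j (Or.inr hj) hj
    have h2 : I = J := key _ hI _ hJ i hi (h1 ▸ Or.inl hi)
    exact hIJ h2
  refine ⟨Q₁, ⟨?_, ?_⟩, ?_, ?_, ?_⟩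
  · -- ∅ ∉ Q₁
    rintro (h1 | ⟨h1, _⟩)
    · exact absurd (h1 ▸ (Or.inl hi : i ∈ I ∪ J)) (Set.notMem_empty i)
    · exact hQ.1 h1
  · -- existence and uniqueness of atom
    intro a
    obtain ⟨K, ⟨hKQ, haK⟩, hKuniq⟩ := hQ.2 a
    by_cases hK : K = I ∨ K = J
    · refine ⟨I ∪ J, ⟨Set.mem_insert _ _, ?_⟩, ?_⟩
      · rcases hK with rfl | rfl
        · exact Or.inl haK
        · exact Or.inr haK
      · rintro B ⟨(rfl | ⟨hBQ, hBne⟩), haB⟩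
        · rfl
        · exfalso
          have : B = K := (hKuniq B ⟨hBQ, haB⟩)
          apply hBne
          rcases hK with rfl | rfl
          · exact Or.inl this
          · exact Or.inr this
    · push_neg at hK
      refine ⟨K, ⟨Or.inr ⟨hKQ, by simp [hK.1, hK.2]⟩, haK⟩, ?_⟩
      rintro B ⟨(rfl | ⟨hBQ, _⟩), haB⟩
      · exfalso
        rcases haB with haB | haB
        · exact hK.1 (hKuniq I ⟨hI, haB⟩ ▸ rfl)
        · exact hK.2 (hKuniq J ⟨hJ, haB⟩ ▸ rfl)
      · exact hKuniq B ⟨hBQ, haB⟩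
  · -- coarser
    intro A hA
    by_cases hAI : A = I
    · exact ⟨I ∪ J, Set.mem_insert _ _, hAI ▸ Set.subset_union_left⟩
    by_cases hAJ : A = J
    · exact ⟨I ∪ J, Set.mem_insert _ _, hAJ ▸ Set.subset_union_right⟩
    · exact ⟨A, Or.inr ⟨hA, by simp [hAI, hAJ]⟩, subset_rfl⟩
  · -- Q₁ ≠ Q
    intro heq
    exact hIJnotQ (heq ▸ Set.mem_insert _ _)
  · -- diameter bound
    rintro B (rfl | ⟨hBQ, _⟩) a ha b hb
    · have bound : ∀ x ∈ I ∪ J, ∀ y ∈ I ∪ J, dist (h x) (h y) ≤ 3 * β := by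
        rintro x (hx | hx) y (hy | hy)
        · calc dist (h x) (h y) ≤ α := hdiam I hI x hx y hy
            _ ≤ 3 * β := by linarith
        · calc dist (h x) (h y) ≤ dist (h x) (h i) + dist (h i) (h j) + dist (h j) (h y) :=
              dist_triangle4 _ _ _ _
            _ ≤ α + β + α :=
              add_le_add (add_le_add (hdiam I hI x hx i hi) hd) (hdiam J hJ j hj y hy)
            _ ≤ 3 * β := by linarith
        · calc dist (h x) (h y) ≤ dist (h x) (h j) + dist (h j) (h i) + dist (h i) (h y) :=
              dist_triangle4 _ _ _ _
            _ ≤ α + β + α := by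
              refine add_le_add (add_le_add (hdiam J hJ x hx j hj) ?_) (hdiam I hI i hi y hy)
              rw [dist_comm]; exact hd
            _ ≤ 3 * β := by linarith
        · calc dist (h x) (h y) ≤ α := hdiam J hJ x hx y hy
            _ ≤ 3 * β := by linarith
      exact bound a ha b hb
    · calc dist (h a) (h b) ≤ α := hdiam B hBQ a ha b hb
        _ ≤ 3 * β := by linarith
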